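/- arXiv:1108.0895 — 6 statements merged into one kernel-verified Lean document; each statement's English description precedes it below -/
import Mathlib

section
/- Let S1, S2 be finite subsets of a finite set Ω with |S1| = f1, |S2| = f2, |S1 ∩ S2| = a, and S1 ∪ S2 nonempty. If π is a uniformly random permutation of Ω and z1 = min(π(S1)), z2 = min(π(S2)), then Pr(z1 = z2) = a / (f1 + f2 - a). -/
/-!
Over `U = S1 ∪ S2` a permutation `π` attains its minimum at a single point, `π.argminOn U`, and
`min π(S1) = min π(S2)` exactly when this point lies in `S1 ∩ S2`. Right multiplication by the
transposition of two points of `U` exchanges the permutations whose argmin is one or the other, so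
the argmin is uniformly distributed on `U` and the probability is `|S1 ∩ S2| / |S1 ∪ S2|`.
-/

open Finset

namespace Equiv.Perm

variable {Ω : Type*} [LinearOrder Ω] [DecidableEq Ω]

noncomputable def argminOn (π : Perm Ω) (U : Finset Ω) (hU : U.Nonempty) : Ω :=
  π.symm ((U.image π).min' (hU.image π))

section argminOn

variable {U : Finset Ω} (hU : U.Nonempty) (π : Perm Ω)

lemma apply_argminOn : π (π.argminOn U hU) = (U.image π).min' (hU.image π) :=
  π.apply_symm_apply _

lemma argminOn_mem : π.argminOn U hU ∈ U := by
  obtain ⟨x, hx, hπx⟩ := mem_image.mp (min'_mem (U.image π) (hU.image π))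
  rwa [π.injective (hπx.trans (apply_argminOn hU π).symm)] at hx

lemma apply_argminOn_le {y : Ω} (hy : y ∈ U) : π (π.argminOn U hU) ≤ π y := by
  rw [apply_argminOn]
  exact min'_le _ _ (mem_image_of_mem π hy)

lemma argminOn_eq_iff {x : Ω} : π.argminOn U hU = x ↔ x ∈ U ∧ ∀ y ∈ U, π x ≤ π y := by
  refine ⟨fun h ↦ h ▸ ⟨argminOn_mem hU π, fun y ↦ apply_argminOn_le hU π⟩, fun ⟨hx, hle⟩ ↦ ?_⟩
  exact π.injective ((apply_argminOn_le hU π hx).antisymm (hle _ (argminOn_mem hU π)))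

lemma coe_apply_argminOn : ((π (π.argminOn U hU) : Ω) : WithTop Ω) = (U.image π).min := by
  rw [apply_argminOn, coe_min']

lemma argminOn_mem_iff_min_eq {T : Finset Ω} (hTU : T ⊆ U) :
    π.argminOn U hU ∈ T ↔ (T.image π).min = (U.image π).min := by
  rw [← coe_apply_argminOn hU π]
  refine ⟨fun hT ↦ le_antisymm ?_ ?_, fun h ↦ ?_⟩
  · exact Finset.min_le (mem_image_of_mem π hT)
  · refine Finset.le_min fun _ hz ↦ ?_
    obtain ⟨y, hy, rfl⟩ := mem_image.mp hz
    exact WithTop.coe_le_coe.mpr (apply_argminOn_le hU π (hTU hy))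
  · obtain ⟨z, hz, hπz⟩ := mem_image.mp (mem_of_min h)
    rwa [← π.injective hπz]

lemma argminOn_mul_of_bijOn {σ : Perm Ω} (hσ : Set.BijOn σ U U) :
    (π * σ).argminOn U hU = σ⁻¹ (π.argminOn U hU) := by
  rw [argminOn_eq_iff]
  refine ⟨hσ.perm_inv.mapsTo (argminOn_mem hU π), fun y hy ↦ ?_⟩
  simpa only [mul_apply, coe_inv, Equiv.apply_symm_apply] using
    apply_argminOn_le hU π (hσ.mapsTo hy)

lemma min_image_eq_min_image_iff {S₁ S₂ : Finset Ω} (hS : (S₁ ∪ S₂).Nonempty) :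
    (S₁.image π).min = (S₂.image π).min ↔ π.argminOn (S₁ ∪ S₂) hS ∈ S₁ ∩ S₂ := by
  have hmin : ((S₁ ∪ S₂).image π).min = (S₁.image π).min ⊓ (S₂.image π).min := by
    rw [image_union]
    -- `Finset.min_union` is stated for the union built from the `LinearOrder`'s decidable equality
    convert Finset.min_union
  rw [mem_inter, argminOn_mem_iff_min_eq hS π subset_union_left,
    argminOn_mem_iff_min_eq hS π subset_union_right, hmin]
  exact ⟨fun h ↦ by simp only [h, inf_idem, and_self], fun ⟨h₁, h₂⟩ ↦ h₁.trans h₂.symm⟩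

end argminOn

variable [Fintype Ω] {U : Finset Ω} (hU : U.Nonempty)

lemma card_argminOn_eq_eq {x y : Ω} (hx : x ∈ U) (hy : y ∈ U) :
    #{π : Perm Ω | π.argminOn U hU = x} = #{π : Perm Ω | π.argminOn U hU = y} := by
  have hswap : Set.BijOn (swap x y) U U := swap_bijOn_self (iff_of_true hx hy)
  refine card_equiv (Equiv.mulRight (swap x y)) fun π ↦ ?_
  simp only [mem_filter_univ, coe_mulRight, argminOn_mul_of_bijOn hU π hswap, swap_inv]
  exact ⟨fun h ↦ h ▸ swap_apply_left x y,
    fun h ↦ (swap_apply_eq_iff.mp h).trans (swap_apply_right x y)⟩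

lemma card_argminOn_mem {T : Finset Ω} (hTU : T ⊆ U) {x : Ω} (hx : x ∈ U) :
    #{π : Perm Ω | π.argminOn U hU ∈ T} = #T * #{π : Perm Ω | π.argminOn U hU = x} := by
  rw [← sum_card_fiberwise_eq_card_filter]
  exact sum_const_nat fun y hy ↦ card_argminOn_eq_eq hU (hTU hy) hx

lemma card_argminOn_mem_div_card {T : Finset Ω} (hTU : T ⊆ U) :
    (#{π : Perm Ω | π.argminOn U hU ∈ T} : ℝ) / Fintype.card (Perm Ω) = #T / #U := by
  obtain ⟨x, hx⟩ := id hU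
  have hall : Fintype.card (Perm Ω) = #U * #{π : Perm Ω | π.argminOn U hU = x} := by
    simp only [← card_argminOn_mem hU subset_rfl hx, argminOn_mem, filter_true, card_univ]
  have hfiber : (#{π : Perm Ω | π.argminOn U hU = x} : ℝ) ≠ 0 := by
    have := Fintype.card_ne_zero (α := Perm Ω)
    rw [hall] at this
    exact_mod_cast right_ne_zero_of_mul this
  rw [card_argminOn_mem hU hTU hx, hall]
  push_cast
  exact mul_div_mul_right _ _ hfiber

end Equiv.Perm

open Equiv.Perm in
theorem minwise_collision_prob {Ω : Type*} [Fintype Ω] [LinearOrder Ω] [DecidableEq Ω]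
    (S1 S2 : Finset Ω) (f1 f2 a : ℕ)
    (hf1 : S1.card = f1) (hf2 : S2.card = f2) (ha : (S1 ∩ S2).card = a)
    (hne : (S1 ∪ S2).Nonempty) :
    ((Finset.univ.filter
        (fun π : Equiv.Perm Ω => (S1.image π).min = (S2.image π).min)).card : ℝ)
      / (Fintype.card (Equiv.Perm Ω) : ℝ)
      = (a : ℝ) / ((f1 : ℝ) + (f2 : ℝ) - (a : ℝ)) := by
  rw [filter_congr fun π _ ↦ min_image_eq_min_image_iff π hne,
    card_argminOn_mem_div_card hne inter_subset_union, ← hf1, ← hf2, ← ha, ← Nat.cast_add,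
    ← card_union_add_card_inter, Nat.cast_add, add_sub_cancel_right]
end

section
/- Let S1, S2 be finite subsets of a finite linearly ordered set Ω with |S1| = f1, |S2| = f2, |S1 ∩ S2| = a, and S1 ∪ S2 nonempty. If π is a uniformly random permutation of Ω and z1 = min(π(S1)), z2 = min(π(S2)), then Pr(z1 < z2) = (f1 - a) / (f1 + f2 - a). -/
open Finset

private def Amin {Ω : Type*} [Fintype Ω] [LinearOrder Ω] [DecidableEq Ω]
    (U : Finset Ω) (x : Ω) : Finset (Equiv.Perm Ω) :=
  Finset.univ.filter (fun π => ∀ y ∈ U, y ≠ x → π x < π y)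

private lemma mem_Amin {Ω : Type*} [Fintype Ω] [LinearOrder Ω] [DecidableEq Ω]
    {U : Finset Ω} {x : Ω} {π : Equiv.Perm Ω} :
    π ∈ Amin U x ↔ ∀ y ∈ U, y ≠ x → π x < π y := by
  simp [Amin]

private lemma swap_mem_Amin {Ω : Type*} [Fintype Ω] [LinearOrder Ω] [DecidableEq Ω]
    {U : Finset Ω} {x x' : Ω} (hx : x ∈ U) (hx' : x' ∈ U) (hxx : x ≠ x')
    {π : Equiv.Perm Ω} (hπ : π ∈ Amin U x) : π * Equiv.swap x x' ∈ Amin U x' := by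
  rw [mem_Amin] at hπ ⊢
  intro y hy hyx'
  have hswx' : (Equiv.swap x x') x' = x := Equiv.swap_apply_right x x'
  simp only [Equiv.Perm.mul_apply, hswx']
  rcases eq_or_ne y x with rfl | hyx
  · rw [Equiv.swap_apply_left]
    exact hπ x' hx' (Ne.symm hxx)
  · rw [Equiv.swap_apply_of_ne_of_ne hyx hyx']
    exact hπ y hy hyx

private lemma card_Amin_eq {Ω : Type*} [Fintype Ω] [LinearOrder Ω] [DecidableEq Ω]
    {U : Finset Ω} {x x' : Ω} (hx : x ∈ U) (hx' : x' ∈ U) :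
    (Amin U x).card = (Amin U x').card := by
  rcases eq_or_ne x x' with rfl | hxx
  · rfl
  apply Finset.card_bij' (fun π _ => π * Equiv.swap x x') (fun σ _ => σ * Equiv.swap x x')
  · intro π hπ
    exact swap_mem_Amin hx hx' hxx hπ
  · intro σ hσ
    have := swap_mem_Amin hx' hx (Ne.symm hxx) hσ
    rwa [Equiv.swap_comm] at this
  · intro π _
    rw [mul_assoc, Equiv.swap_mul_self, mul_one]
  · intro σ _
    rw [mul_assoc, Equiv.swap_mul_self, mul_one]

private lemma min_image_eq {Ω : Type*} [Fintype Ω] [LinearOrder Ω] [DecidableEq Ω]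
    {S : Finset Ω} {x : Ω} (hx : x ∈ S) (π : Equiv.Perm Ω)
    (h : ∀ y ∈ S, π x ≤ π y) : (S.image π).min = (π x : WithTop Ω) := by
  apply le_antisymm
  · exact Finset.min_le (Finset.mem_image_of_mem _ hx)
  · apply Finset.le_min
    intro b hb
    obtain ⟨y, hy, rfl⟩ := Finset.mem_image.mp hb
    exact_mod_cast h y hy

private lemma key_iff {Ω : Type*} [Fintype Ω] [LinearOrder Ω] [DecidableEq Ω]
    (S1 S2 : Finset Ω) (π : Equiv.Perm Ω) :
    (S1.image π).min < (S2.image π).min ↔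
      ∃ x ∈ S1 \ S2, ∀ y ∈ S1 ∪ S2, y ≠ x → π x < π y := by
  constructor
  · intro h
    have hS1 : S1.Nonempty := by
      rcases S1.eq_empty_or_nonempty with rfl | h'
      · simp [not_top_lt] at h
      · exact h'
    obtain ⟨x, hxS1, hmin⟩ := S1.exists_min_image π hS1
    have hminEq : (S1.image π).min = (π x : WithTop Ω) := min_image_eq hxS1 π hmin
    have hlt2 : ∀ y ∈ S2, π x < π y := by
      intro y hy
      have : (π x : WithTop Ω) < (π y : WithTop Ω) := by
        calc (π x : WithTop Ω) = (S1.image π).min := hminEq.symm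
        _ < (S2.image π).min := h
        _ ≤ π y := Finset.min_le (Finset.mem_image_of_mem _ hy)
      exact_mod_cast this
    have hxnS2 : x ∉ S2 := fun hc => lt_irrefl _ (hlt2 x hc)
    refine ⟨x, Finset.mem_sdiff.mpr ⟨hxS1, hxnS2⟩, ?_⟩
    intro y hy hyx
    rcases Finset.mem_union.mp hy with h1 | h2
    · exact lt_of_le_of_ne (hmin y h1) (fun he => hyx (π.injective he).symm)
    · exact hlt2 y h2
  · rintro ⟨x, hx, hlt⟩
    obtain ⟨hxS1, hxnS2⟩ := Finset.mem_sdiff.mp hx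
    have hmin1 : (S1.image π).min = (π x : WithTop Ω) := by
      apply min_image_eq hxS1
      intro y hy
      rcases eq_or_ne y x with rfl | hyx
      · exact le_rfl
      · exact (hlt y (Finset.mem_union_left _ hy) hyx).le
    rw [hmin1]
    rcases S2.eq_empty_or_nonempty with rfl | hS2
    · simp [WithTop.coe_lt_top]
    · obtain ⟨b, hb⟩ := Finset.min_of_nonempty (hS2.image π)
      rw [hb]
      obtain ⟨y, hy, rfl⟩ := Finset.mem_image.mp (Finset.mem_of_min hb)
      have hyx : y ≠ x := fun he => hxnS2 (he ▸ hy)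
      exact_mod_cast hlt y (Finset.mem_union_right _ hy) hyx

theorem minwise_less_prob {Ω : Type*} [Fintype Ω] [LinearOrder Ω] [DecidableEq Ω]
    (S1 S2 : Finset Ω) (f1 f2 a : ℕ)
    (hf1 : S1.card = f1) (hf2 : S2.card = f2) (ha : (S1 ∩ S2).card = a)
    (hne : (S1 ∪ S2).Nonempty) :
    ((Finset.univ.filter
        (fun π : Equiv.Perm Ω => (S1.image π).min < (S2.image π).min)).card : ℝ)
      / (Fintype.card (Equiv.Perm Ω) : ℝ)
      = ((f1 : ℝ) - (a : ℝ)) / ((f1 : ℝ) + (f2 : ℝ) - (a : ℝ)) := by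
  classical
  set U : Finset Ω := S1 ∪ S2 with hU
  obtain ⟨x0, hx0⟩ := hne
  set N : ℕ := (Amin U x0).card with hN
  -- disjointness of the Amin's
  have hdisj : ∀ x ∈ U, ∀ x' ∈ U, x ≠ x' → Disjoint (Amin U x) (Amin U x') := by
    intro x hx x' hx' hxx
    rw [Finset.disjoint_left]
    intro π h1 h2
    rw [mem_Amin] at h1 h2
    exact lt_asymm (h1 x' hx' (Ne.symm hxx)) (h2 x hx hxx)
  -- universe decomposition
  have huniv : (Finset.univ : Finset (Equiv.Perm Ω)) = U.biUnion (Amin U) := by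
    ext π
    simp only [Finset.mem_univ, true_iff, Finset.mem_biUnion]
    obtain ⟨x, hx, hmin⟩ := U.exists_min_image π ⟨x0, hx0⟩
    refine ⟨x, hx, mem_Amin.mpr ?_⟩
    intro y hy hyx
    exact lt_of_le_of_ne (hmin y hy) (fun he => hyx (π.injective he).symm)
  -- event decomposition
  have hevent : Finset.univ.filter
        (fun π : Equiv.Perm Ω => (S1.image π).min < (S2.image π).min)
      = (S1 \ S2).biUnion (Amin U) := by
    ext π
    simp only [Finset.mem_filter, Finset.mem_univ, true_and, Finset.mem_biUnion]
    rw [key_iff]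
    constructor
    · rintro ⟨x, hx, h⟩; exact ⟨x, hx, mem_Amin.mpr h⟩
    · rintro ⟨x, hx, h⟩; exact ⟨x, hx, mem_Amin.mp h⟩
  have hsub : S1 \ S2 ⊆ U := fun y hy =>
    Finset.mem_union_left _ (Finset.mem_sdiff.mp hy).1
  have hcardAll : Fintype.card (Equiv.Perm Ω) = U.card * N := by
    rw [← Finset.card_univ, huniv,
      Finset.card_biUnion (fun x hx x' hx' h => hdisj x hx x' hx' h)]
    rw [Finset.sum_congr rfl (fun x hx => card_Amin_eq hx hx0)]
    simp [hN]
  have hcardEv : (Finset.univ.filter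
        (fun π : Equiv.Perm Ω => (S1.image π).min < (S2.image π).min)).card
      = (S1 \ S2).card * N := by
    rw [hevent, Finset.card_biUnion
      (fun x hx x' hx' h => hdisj x (hsub hx) x' (hsub hx') h)]
    rw [Finset.sum_congr rfl (fun x hx => card_Amin_eq (hsub hx) hx0)]
    simp [hN]
  have hNpos : 0 < N := by
    rcases Nat.eq_zero_or_pos N with h | h
    · exfalso
      have hc : Fintype.card (Equiv.Perm Ω) = 0 := by rw [hcardAll, h, Nat.mul_zero]
      exact (Fintype.card_pos (α := Equiv.Perm Ω)).ne' hc
    · exact h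
  have hUpos : 0 < U.card := Finset.card_pos.mpr ⟨x0, hx0⟩
  -- numeric identities
  have h1 : ((S1 \ S2).card : ℝ) = (f1 : ℝ) - a := by
    have := Finset.card_sdiff_add_card_inter S1 S2
    have : ((S1 \ S2).card : ℝ) + a = f1 := by exact_mod_cast (by rw [ha, hf1] at this; exact this)
    linarith
  have h2 : (U.card : ℝ) = (f1 : ℝ) + f2 - a := by
    have := Finset.card_union_add_card_inter S1 S2
    have : (U.card : ℝ) + a = f1 + f2 := by exact_mod_cast (by rw [ha, hf1, hf2] at this; exact this)
    linarith
  rw [hcardAll, hcardEv]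
  push_cast
  rw [h1, h2]
  have hN' : (N : ℝ) ≠ 0 := Nat.cast_ne_zero.mpr hNpos.ne'
  have hU' : (f1 : ℝ) + f2 - a ≠ 0 := by
    rw [← h2]; exact_mod_cast hUpos.ne'
  field_simp
end

section
/- For reals 0 < a < f2 ≤ f1, the MLE asymptotic variance coefficient V_MLE(a) = (f1+f2-a)² / [ (f1+f2)/a + f2/(f1-a) + f1/(f2-a) ] is at most the coefficient for the collision-only estimator, V_=(a) = (f1+f2-a)²·a·(f1+f2-2a)/(f1+f2)². -/
theorem mle_variance_le_collision_variance (a f1 f2 : ℝ)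
    (ha : 0 < a) (haf2 : a < f2) (hf : f2 ≤ f1) :
    (f1 + f2 - a) ^ 2 / ((f1 + f2) / a + f2 / (f1 - a) + f1 / (f2 - a))
      ≤ (f1 + f2 - a) ^ 2 * a * (f1 + f2 - 2 * a) / (f1 + f2) ^ 2 := by
  have hx : 0 < f1 - a := by linarith
  have hy : 0 < f2 - a := by linarith
  have hS : 0 < f1 + f2 := by linarith
  have h2a : 0 < f1 + f2 - 2 * a := by linarith
  have hf1 : 0 < f1 := by linarith
  have hf2 : 0 < f2 := by linarith
  have hP : 0 < (f1 + f2) * ((f1 - a) * (f2 - a)) + f2 * (a * (f2 - a)) + f1 * (a * (f1 - a)) := by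
    positivity
  have hDeq : (f1 + f2) / a + f2 / (f1 - a) + f1 / (f2 - a)
      = ((f1 + f2) * ((f1 - a) * (f2 - a)) + f2 * (a * (f2 - a)) + f1 * (a * (f1 - a)))
        / (a * ((f1 - a) * (f2 - a))) := by
    field_simp
  rw [hDeq, div_div_eq_mul_div, div_le_div_iff₀ hP (by positivity)]
  have t1 : 0 ≤ (f1 + f2 - a) ^ 2 * a ^ 2 * (f1 + f2 - 2 * a) * (f1 - f2) ^ 2 := by positivity
  have t2 : 0 ≤ (f1 + f2 - a) ^ 2 * a ^ 3 * (f1 - f2) ^ 2 := by positivity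
  nlinarith [t1, t2]
end

section
/- If f1 = f2 = f and 0 < a < f, then the 3-cell MLE variance coefficient (2f-a)² / [ 2f/a + 2f/(f-a) ] equals the collision-estimator coefficient (2f-a)²·a·(2f-2a)/(2f)²; i.e., when the two sets have equal size, â_= achieves the Fisher information bound. -/
theorem equal_sizes_mle_eq_collision (a f : ℝ) (ha : 0 < a) (haf : a < f) :
    (2 * f - a) ^ 2 / (2 * f / a + 2 * f / (f - a))
      = (2 * f - a) ^ 2 * a * (2 * f - 2 * a) / (2 * f) ^ 2 := by
  have hf : (0:ℝ) < f := ha.trans haf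
  have hfa : f - a ≠ 0 := by linarith
  have ha' : a ≠ 0 := ha.ne'
  have hf' : f ≠ 0 := hf.ne'
  have hden : 2 * f / a + 2 * f / (f - a) = 2 * f * f / (a * (f - a)) := by
    field_simp; ring
  rw [hden]
  rw [div_div_eq_mul_div]
  field_simp
end

section
/- Let 0 < r2 < 1, 0 ≤ s ≤ r1, q = r1+r2-s ∈ (0,1), b ≥ 1, N = 2^b. Define for t < d in {0,...,N-1}: p(t,d) = r2(r1-s)·(1-r2)^{d-t-1}/(1-(1-r2)^N) · (1-q)^t/(1-(1-q)^N). Then p(t,d) = Σ_{i≥0} Σ_{j≥0: d+jN > t+iN} r2(r1-s)(1-r2)^{(d+jN)-(t+iN)-1}(1-q)^{t+iN}, i.e., the double geometric sum over z1 = t + iN, z2 = d + jN with z1 < z2 equals this closed form. -/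
lemma shifted_geom (x : ℝ) (hx0 : 0 ≤ x) (hx1 : x < 1) (i : ℕ) :
    ∑' j : ℕ, (if i ≤ j then x ^ (j - i) else 0) = (1 - x)⁻¹ := by
  have hinj : Function.Injective (fun k : ℕ => k + i) := fun a b h => by
    simpa using h
  have hsupp : Function.support (fun j : ℕ => if i ≤ j then x ^ (j - i) else 0)
      ⊆ Set.range (fun k : ℕ => k + i) := by
    intro j hj
    by_cases h : i ≤ j
    · exact ⟨j - i, by simp; omega⟩
    · simp [h] at hj
  have := hinj.tsum_eq hsupp
  rw [← this]
  simp only [le_add_self, if_true, Nat.add_sub_cancel]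
  exact tsum_geometric_of_lt_one hx0 hx1

theorem bbit_offdiag_cell_prob (r1 r2 s q : ℝ) (hq : q = r1 + r2 - s)
    (hr2a : 0 < r2) (hr2b : r2 < 1) (hs0 : 0 ≤ s) (hsr1 : s ≤ r1)
    (hq0 : 0 < q) (hq1 : q < 1)
    (b : ℕ) (hb : 1 ≤ b) (N : ℕ) (hN : N = 2 ^ b)
    (t d : ℕ) (htd : t < d) (hd : d < N) :
    (∑' i : ℕ, ∑' j : ℕ,
        if t + i * N < d + j * N then
          r2 * (r1 - s) * (1 - r2) ^ ((d + j * N) - (t + i * N) - 1)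
            * (1 - q) ^ (t + i * N)
        else 0)
      = r2 * (r1 - s) * (1 - r2) ^ (d - t - 1) / (1 - (1 - r2) ^ N)
          * ((1 - q) ^ t / (1 - (1 - q) ^ N)) := by
  have hN0 : 0 < N := by subst hN; positivity
  have hx0 : (0:ℝ) ≤ 1 - r2 := by linarith
  have hx1 : 1 - r2 < 1 := by linarith
  have hy0 : (0:ℝ) ≤ 1 - q := by linarith
  have hy1 : 1 - q < 1 := by linarith
  have hxN0 : (0:ℝ) ≤ (1-r2)^N := pow_nonneg hx0 N
  have hxN1 : (1-r2)^N < 1 := pow_lt_one₀ hx0 hx1 hN0.ne'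
  have hyN0 : (0:ℝ) ≤ (1-q)^N := pow_nonneg hy0 N
  have hyN1 : (1-q)^N < 1 := pow_lt_one₀ hy0 hy1 hN0.ne'
  have hcond : ∀ i j : ℕ, (t + i * N < d + j * N) ↔ i ≤ j := by
    intro i j
    constructor
    · intro h
      by_contra hij
      push_neg at hij
      have h1 : (j + 1) * N ≤ i * N := Nat.mul_le_mul_right N hij
      have : d + j * N < t + i * N := by
        calc d + j * N < N + j * N := by omega
        _ = (j + 1) * N := by ring
        _ ≤ i * N := h1
        _ ≤ t + i * N := by omega
      omega
    · intro h
      have h1 : i * N ≤ j * N := Nat.mul_le_mul_right N h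
      omega
  -- inner sums
  have inner : ∀ i : ℕ, (∑' j : ℕ,
        if t + i * N < d + j * N then
          r2 * (r1 - s) * (1 - r2) ^ ((d + j * N) - (t + i * N) - 1)
            * (1 - q) ^ (t + i * N)
        else 0)
      = (r2 * (r1 - s) * (1 - r2) ^ (d - t - 1) * (1 - (1 - r2) ^ N)⁻¹
          * (1 - q) ^ t) * ((1 - q) ^ N) ^ i := by
    intro i
    have hterm : ∀ j : ℕ, (if t + i * N < d + j * N then
          r2 * (r1 - s) * (1 - r2) ^ ((d + j * N) - (t + i * N) - 1)
            * (1 - q) ^ (t + i * N)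
        else 0)
        = (r2 * (r1 - s) * (1 - r2) ^ (d - t - 1) * (1 - q) ^ (t + i * N))
          * (if i ≤ j then ((1 - r2) ^ N) ^ (j - i) else 0) := by
      intro j
      simp only [hcond i j]
      by_cases h : i ≤ j
      · simp only [h, if_true]
        have hexp : (d + j * N) - (t + i * N) - 1 = (d - t - 1) + (j - i) * N := by
          have h2 : j * N = (j - i) * N + i * N := by
            rw [Nat.sub_mul]
            have : i * N ≤ j * N := Nat.mul_le_mul_right N h
            omega
          have h3 : t + i * N < d + j * N := (hcond i j).mpr h
          omega
        rw [hexp, pow_add, ← pow_mul]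
        ring
      · simp [h]
    rw [tsum_congr hterm, tsum_mul_left, shifted_geom _ hxN0 hxN1 i,
        pow_add, ← pow_mul, mul_comm i N, pow_mul]
    ring
  rw [tsum_congr inner, tsum_mul_left, tsum_geometric_of_lt_one hyN0 hyN1]
  field_simp
end

section
/- Let S1, S2 ⊆ Ω = {0,...,D-1}, |S1| = f1, |S2| = f2, |S1∩S2| = a ≥ 1, and let π be a uniformly random permutation of Ω. Then for 0 ≤ i ≤ D - f1 - f2 + a, Pr(min π(S1) = i and min π(S2) = i) = (a/D) · Π_{t=0}^{i-1} (D - f1 - f2 + a - t)/(D - 1 - t). -/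
/-!
Put σ = π⁻¹. Both minima equal `i` exactly when σ i ∈ S1 ∩ S2 and σ j ∉ S1 ∪ S2 for all j < i.
A permutation is its restriction to `insert i (Iio i)` together with one of (D - i - 1)!
extensions, and an admissible restriction is a choice of σ i among the `a` common elements
together with an injection of `Iio i` into the D - u points outside S1 ∪ S2, where
u = |S1 ∪ S2| = f1 + f2 - a. So the count is a (D - u)(D - u - 1)⋯(D - u - i + 1) (D - i - 1)!,
and D! = D (D - 1)⋯(D - i) (D - i - 1)! turns the quotient into the product.
-/

open Finset Function Fintype Nat

theorem Finset.min_eq_coe_iff {α : Type*} [LinearOrder α] {s : Finset α} {a : α} :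
    s.min = a ↔ a ∈ s ∧ ∀ b ∈ s, a ≤ b := by
  refine ⟨fun h => ⟨mem_of_min h, fun b hb => WithTop.coe_le_coe.1 (h ▸ min_le hb)⟩, ?_⟩
  exact fun ⟨ha, hle⟩ =>
    le_antisymm (min_le ha) (Finset.le_min fun b hb => WithTop.coe_le_coe.2 (hle b hb))

theorem Finset.min_image_equiv_eq_coe_iff {α γ : Type*} [LinearOrder γ] (e : α ≃ γ)
    (s : Finset α) (c : γ) :
    (s.image e).min = c ↔ e.symm c ∈ s ∧ ∀ d < c, e.symm d ∉ s := by
  have hmem (d : γ) : d ∈ s.image e ↔ e.symm d ∈ s :=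
    ⟨fun h => by obtain ⟨a, ha, rfl⟩ := mem_image.1 h; simpa,
      fun h => mem_image.2 ⟨_, h, e.apply_symm_apply d⟩⟩
  simp only [min_eq_coe_iff, hmem]
  exact and_congr_right' <| forall_congr' fun d => by rw [imp_not_comm, not_lt]

theorem Nat.cast_descFactorial_eq_prod_range {R : Type*} [CommRing R] (n k : ℕ) :
    (n.descFactorial k : R) = ∏ j ∈ range k, ((n : R) - j) := by
  rw [← descPochhammer_eval_eq_descFactorial, descPochhammer_eval_eq_prod_range]

variable {ι β : Type*} [Fintype ι] [Fintype β] [DecidableEq β]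

def Function.Embedding.optionEquivProdOfDisjoint {B C : Finset β} (h : Disjoint B C) :
    {f : Option ι ↪ β // f none ∈ C ∧ ∀ y, f (some y) ∈ B} ≃ C × (ι ↪ B) where
  toFun f := (⟨f.1 none, f.2.1⟩,
    ⟨fun y => ⟨f.1 (some y), f.2.2 y⟩, fun _ _ hy => Option.some_injective _ <|
      f.1.injective (congrArg Subtype.val hy)⟩)
  invFun p := ⟨(p.2.trans (Embedding.subtype _)).optionElim p.1 (by
      rintro ⟨y, hy : (p.2 y : β) = p.1⟩
      exact disjoint_left.mp h (p.2 y).2 (hy ▸ p.1.2)), p.1.2, fun y => (p.2 y).2⟩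
  left_inv f := by
    ext (_ | y) <;> rfl
  right_inv p := rfl

theorem Function.Embedding.card_filter_option_of_disjoint {B C : Finset β} (h : Disjoint B C) :
    #{f : Option ι ↪ β | f none ∈ C ∧ ∀ y, f (some y) ∈ B}
      = #C * (#B).descFactorial (card ι) := by
  rw [← Fintype.card_subtype, Fintype.card_congr (optionEquivProdOfDisjoint h),
    Fintype.card_prod, card_embedding_eq, card_coe, card_coe]

namespace Equiv.Perm

variable {α : Type*} [Fintype α] [DecidableEq α]

theorem card_filter_trans_toEmbedding_eq (e f : ι ↪ α) :
    #{σ : Perm α | e.trans σ.toEmbedding = f} = (card α - card ι)! := by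
  obtain ⟨σ₀, hσ₀⟩ := exists_extending_pair e f e.injective f.injective
  have hfix : #{σ : Perm α | e.trans σ.toEmbedding = f}
      = #{σ : Perm α | ∀ a, ¬a ∉ Set.range e → σ a = a} := by
    refine card_equiv (Equiv.mulLeft σ₀⁻¹) fun σ => ?_
    simp only [mem_filter, mem_univ, true_and, not_not, Set.forall_mem_range,
      DFunLike.ext_iff, Embedding.trans_apply, Equiv.toEmbedding_apply, coe_mulLeft, mul_apply,
      ← hσ₀, Equiv.Perm.inv_eq_iff_eq]
  rw [hfix, ← Fintype.card_subtype, ← Fintype.card_congr (Perm.subtypeEquivSubtypePerm _),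
    Fintype.card_perm, Fintype.card_subtype_compl, Set.card_range_of_injective e.injective]

theorem card_filter_trans_toEmbedding (e : ι ↪ α) (P : (ι ↪ α) → Prop) [DecidablePred P] :
    #{σ : Perm α | P (e.trans σ.toEmbedding)} = #{f : ι ↪ α | P f} * (card α - card ι)! := by
  rw [card_eq_sum_card_fiberwise (f := fun σ : Perm α => e.trans σ.toEmbedding)
      (t := {f : ι ↪ α | P f}) fun σ hσ => by simpa using hσ]
  refine sum_const_nat fun f hf => ?_
  rw [filter_filter, ← card_filter_trans_toEmbedding_eq e f]
  congr 1
  refine filter_congr fun σ _ => ⟨And.right, fun h => ⟨?_, h⟩⟩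
  simpa [h] using hf

theorem card_filter_apply_mem_and_forall_mem {A B C : Finset α} {x : α} (hx : x ∉ A)
    (hBC : _root_.Disjoint B C) :
    #{σ : Perm α | σ x ∈ C ∧ ∀ y ∈ A, σ y ∈ B}
      = #C * (#B).descFactorial #A * (card α - (#A + 1))! := by
  let e : Option A ↪ α := (Embedding.subtype (· ∈ A)).optionElim x (by simpa using hx)
  have h := card_filter_trans_toEmbedding e fun f => f none ∈ C ∧ ∀ y, f (some y) ∈ B
  rw [Embedding.card_filter_option_of_disjoint hBC, card_option, card_coe] at h
  rw [← h]
  simp [e]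

end Equiv.Perm

theorem Equiv.Perm.card_filter_min_image_eq_and_min_image_eq {α : Type*} [Fintype α]
    [LinearOrder α] [LocallyFiniteOrderBot α] (S₁ S₂ : Finset α) (i : α) :
    #{π : Perm α | (S₁.image π).min = i ∧ (S₂.image π).min = i}
      = #(S₁ ∩ S₂) * (#(S₁ ∪ S₂)ᶜ).descFactorial #(Iio i) * (card α - (#(Iio i) + 1))! := by
  rw [← card_filter_apply_mem_and_forall_mem (x := i) (by simp)
    (disjoint_compl_left.mono_right inter_subset_union)]
  refine card_equiv (Equiv.inv _) fun π => ?_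
  simp only [mem_filter, mem_univ, true_and, min_image_equiv_eq_coe_iff, Equiv.inv_apply,
    Perm.inv_def, mem_inter, mem_Iio, mem_compl, mem_union, not_or, imp_and, forall_and]
  exact and_and_and_comm

theorem exact_joint_minima_prob_general (D : ℕ) (S1 S2 : Finset (Fin D)) (f1 f2 a : ℕ)
    (hf1 : S1.card = f1) (hf2 : S2.card = f2) (ha : (S1 ∩ S2).card = a)
    (i : Fin D) (hi : (i : ℕ) + f1 + f2 ≤ D + a) :
    ((Finset.univ.filter
        (fun π : Equiv.Perm (Fin D) =>
          (S1.image π).min = (i : WithTop (Fin D)) ∧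
          (S2.image π).min = (i : WithTop (Fin D)))).card : ℝ)
      / (Fintype.card (Equiv.Perm (Fin D)) : ℝ)
      = ((a : ℝ) / (D : ℝ)) *
          ∏ t ∈ Finset.range (i : ℕ),
            ((D : ℝ) - (f1 : ℝ) - (f2 : ℝ) + (a : ℝ) - (t : ℝ))
              / ((D : ℝ) - 1 - (t : ℝ)) := by
  have hunion : #(S1 ∪ S2) + a = f1 + f2 := hf1 ▸ hf2 ▸ ha ▸ card_union_add_card_inter S1 S2
  rw [Equiv.Perm.card_filter_min_image_eq_and_min_image_eq, ha, card_compl, Fin.card_Iio,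
    Fintype.card_perm, Fintype.card_fin, prod_div_distrib]
  have hD : 0 < D := i.pos
  have hcompl : ((D - #(S1 ∪ S2) : ℕ) : ℝ) = D - f1 - f2 + a := by
    rw [Nat.cast_sub (by omega)]
    linarith [(by exact_mod_cast hunion : (#(S1 ∪ S2) : ℝ) + a = f1 + f2)]
  have hpred : ((D - 1 : ℕ) : ℝ) = D - 1 := by rw [Nat.cast_sub hD, Nat.cast_one]
  have hfact : (D ! : ℝ) = D * (D - 1).descFactorial i * (D - (i + 1))! := by
    obtain ⟨n, rfl⟩ : ∃ n, D = n + 1 := ⟨D - 1, by omega⟩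
    rw [← factorial_mul_descFactorial (by omega : (i : ℕ) + 1 ≤ n + 1), succ_descFactorial_succ]
    push_cast
    ring
  have hdesc : ((D - 1).descFactorial i : ℝ) ≠ 0 := by
    exact_mod_cast (descFactorial_pos.2 (by omega)).ne'
  rw [← hcompl, ← hpred, ← cast_descFactorial_eq_prod_range, ← cast_descFactorial_eq_prod_range,
    hfact]
  field_simp
  push_cast
  ring

theorem exact_joint_minima_prob (D : ℕ) (S1 S2 : Finset (Fin D)) (f1 f2 a : ℕ)
    (hf1 : S1.card = f1) (hf2 : S2.card = f2) (ha : (S1 ∩ S2).card = a)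
    (ha1 : 1 ≤ a) (i : Fin D) (hi : (i : ℕ) + f1 + f2 ≤ D + a) :
    ((Finset.univ.filter
        (fun π : Equiv.Perm (Fin D) =>
          (S1.image π).min = (i : WithTop (Fin D)) ∧
          (S2.image π).min = (i : WithTop (Fin D)))).card : ℝ)
      / (Fintype.card (Equiv.Perm (Fin D)) : ℝ)
      = ((a : ℝ) / (D : ℝ)) *
          ∏ t ∈ Finset.range (i : ℕ),
            ((D : ℝ) - (f1 : ℝ) - (f2 : ℝ) + (a : ℝ) - (t : ℝ))
              / ((D : ℝ) - 1 - (t : ℝ)) :=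
  exact_joint_minima_prob_general D S1 S2 f1 f2 a hf1 hf2 ha i hi
end
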